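/- arXiv:0906.4419 — 4 statements merged into one kernel-verified Lean document; each statement's English description precedes it below -/
import Mathlib

section
/- Fix z ∈ ℝ and let f_z(x) = e^{x²/2} ∫_{-∞}^{x} (1_{(-∞,z]}(a) − Φ(z)) e^{−a²/2} da. Then for every x ≠ z, f_z is differentiable at x and f_z'(x) − x f_z(x) = 1_{(−∞,z]}(x) − Φ(z). -/
open MeasureTheory ProbabilityTheory Real

/-- The standard normal cumulative distribution function. -/
noncomputable def stdNormalCDF (z : ℝ) : ℝ :=
    (gaussianReal 0 1 (Set.Iic z)).toReal

/-- The solution of the Stein equation associated with level `z`. -/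
noncomputable def steinSolution (z x : ℝ) : ℝ :=
    Real.exp (x ^ 2 / 2) *
      ∫ a in Set.Iio x,
        (Set.indicator (Set.Iic z) (fun _ => (1 : ℝ)) a - stdNormalCDF z) * Real.exp (-a ^ 2 / 2)

theorem steinSolution_solves_stein_equation (z : ℝ) :
    ∀ x : ℝ, x ≠ z →
      HasDerivAt (steinSolution z)
        (Set.indicator (Set.Iic z) (fun _ => (1 : ℝ)) x - stdNormalCDF z
          + x * steinSolution z x) x := by
  intro x hx
  set c := stdNormalCDF z with hc
  set g : ℝ → ℝ := fun a =>
    (Set.indicator (Set.Iic z) (fun _ => (1 : ℝ)) a - c) * Real.exp (-a ^ 2 / 2) with hg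
  -- integrability of g
  have hexp_int : Integrable (fun a : ℝ => Real.exp (-a ^ 2 / 2)) := by
    have := integrable_exp_neg_mul_sq (b := (1/2 : ℝ)) (by norm_num)
    convert this using 2 with a
    ring_nf
  have hg_meas : AEStronglyMeasurable g volume := by
    apply AEStronglyMeasurable.mul
    · exact (((measurable_const.indicator measurableSet_Iic).sub
        measurable_const).aestronglyMeasurable)
    · exact (Real.continuous_exp.comp (by continuity)).aestronglyMeasurable
  have hg_int : Integrable g := by
    refine (hexp_int.const_mul (1 + |c|)).mono' hg_meas ?_
    filter_upwards with a
    rw [hg]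
    simp only [norm_mul, Real.norm_eq_abs, Real.abs_exp]
    gcongr
    calc |Set.indicator (Set.Iic z) (fun _ => (1 : ℝ)) a - c|
        ≤ |Set.indicator (Set.Iic z) (fun _ => (1 : ℝ)) a| + |c| := abs_sub _ _
      _ ≤ 1 + |c| := by
          gcongr
          by_cases ha : a ∈ Set.Iic z <;> simp [ha]
  -- continuity of g at x
  have hg_cont : ContinuousAt g x := by
    have hbase : ContinuousAt (fun a : ℝ => Real.exp (-a ^ 2 / 2)) x :=
      (Real.continuous_exp.comp (by continuity)).continuousAt
    rcases lt_or_gt_of_ne hx with h | h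
    · have hev : (fun a : ℝ => (1 - c) * Real.exp (-a ^ 2 / 2)) =ᶠ[nhds x] g := by
        filter_upwards [eventually_lt_nhds h] with a ha
        simp [hg, Set.indicator_of_mem (Set.mem_Iic.2 ha.le)]
      exact (continuousAt_const.mul hbase).congr hev
    · have hev : (fun a : ℝ => (0 - c) * Real.exp (-a ^ 2 / 2)) =ᶠ[nhds x] g := by
        filter_upwards [eventually_gt_nhds h] with a ha
        simp [hg, Set.indicator_of_notMem (by simp [Set.mem_Iic, not_le]; exact ha : a ∉ Set.Iic z)]
      exact (continuousAt_const.mul hbase).congr hev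
  -- derivative of the integral part
  have hG : HasDerivAt (fun y => ∫ a in Set.Iio y, g a) (g x) x := by
    have key : ∀ y : ℝ, ∫ a in Set.Iio y, g a =
        (∫ a in Set.Iio (0:ℝ), g a) + ∫ a in (0:ℝ)..y, g a := by
      intro y
      have h1 := intervalIntegral.integral_Iic_sub_Iic (a := (0:ℝ)) (b := y)
        hg_int.integrableOn hg_int.integrableOn
      rw [integral_Iic_eq_integral_Iio, integral_Iic_eq_integral_Iio] at h1
      linarith
    have hder : HasDerivAt (fun y => (∫ a in Set.Iio (0:ℝ), g a) + ∫ a in (0:ℝ)..y, g a)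
        (g x) x := by
      refine (intervalIntegral.integral_hasDerivAt_right
        (hg_int.intervalIntegrable (a := 0) (b := x))
        (hg_meas.stronglyMeasurableAtFilter)
        hg_cont).const_add _
    exact hder.congr_of_eventuallyEq (by filter_upwards with y; exact key y)
  -- derivative of exp factor
  have hE : HasDerivAt (fun y : ℝ => Real.exp (y ^ 2 / 2)) (x * Real.exp (x ^ 2 / 2)) x := by
    have h1 : HasDerivAt (fun y : ℝ => y ^ 2 / 2) x x := by
      have := (hasDerivAt_pow 2 x).div_const 2
      simpa using this
    simpa [mul_comm] using h1.exp
  have hmul := hE.mul hG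
  have hthis : HasDerivAt (steinSolution z)
      (x * Real.exp (x ^ 2 / 2) * (∫ a in Set.Iio x, g a) + Real.exp (x ^ 2 / 2) * g x) x := hmul
  have hgx : Real.exp (x ^ 2 / 2) * g x
      = Set.indicator (Set.Iic z) (fun _ => (1 : ℝ)) x - c := by
    rw [hg]
    have h1 : Real.exp (x ^ 2 / 2) *
        ((Set.indicator (Set.Iic z) (fun _ => (1 : ℝ)) x - c) * Real.exp (-x ^ 2 / 2))
        = (Set.indicator (Set.Iic z) (fun _ => (1 : ℝ)) x - c) *
          (Real.exp (x ^ 2 / 2) * Real.exp (-x ^ 2 / 2)) := by ring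
    rw [h1, ← Real.exp_add, (by ring : x ^ 2 / 2 + -x ^ 2 / 2 = 0), Real.exp_zero, mul_one]
  convert hthis using 1
  rw [show steinSolution z x = Real.exp (x ^ 2 / 2) * ∫ a in Set.Iio x, g a from rfl, ← hgx]
  ring
end

section
/- Fix z ∈ ℝ and let f_z be the Stein solution f_z(x) = e^{x²/2} ∫_{-∞}^{x} (1_{(-∞,z]}(a) − Φ(z)) e^{−a²/2} da. Then f_z is Lipschitz on ℝ with Lipschitz constant at most 2. -/
/-!
Write `φ(a) = e^{-a²/2}`, `L(x) = ∫_{-∞}^x φ`, `U(x) = ∫_x^∞ φ` (`gaussWeight`, `gaussLower`,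
`gaussUpper`), so `L + U = √(2π)` and `Φ = L / √(2π)`. Then
`√(2π) f_z(x) = e^{x²/2} L(min x z) U(max x z)`, which shows the reflection symmetry
`f_z(-x) = f_{-z}(x)`. Mills' inequality `x U(x) ≤ φ(x)` gives `|x f_z(x)| ≤ 1`, and on `x ≤ z`
we have `f_z' = x f_z + U(z)/√(2π)`, so `|f_z'| ≤ 2` there. Reflection gives the same bound on
`x ≥ z`, and two `2`-Lipschitz pieces meeting at `z` glue to a `2`-Lipschitz function.
-/

open MeasureTheory ProbabilityTheory Real

open Filter Topology
open scoped NNReal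

lemma LipschitzOnWith.lipschitzWith_of_Iic_Ici {E : Type*} [PseudoMetricSpace E] {f : ℝ → E}
    {K : ℝ≥0} {a : ℝ} (h₁ : LipschitzOnWith K f (Set.Iic a))
    (h₂ : LipschitzOnWith K f (Set.Ici a)) : LipschitzWith K f := by
  refine LipschitzWith.of_dist_le_mul fun x y => ?_
  wlog hxy : x ≤ y generalizing x y
  · rw [dist_comm, dist_comm x]; exact this y x (le_of_not_ge hxy)
  rcases le_total y a with hya | hay
  · exact h₁.dist_le_mul x (hxy.trans hya) y hya
  rcases le_total a x with hax | hxa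
  · exact h₂.dist_le_mul x hax y hay
  calc dist (f x) (f y) ≤ dist (f x) (f a) + dist (f a) (f y) := dist_triangle _ _ _
    _ ≤ K * dist x a + K * dist a y :=
        add_le_add (h₁.dist_le_mul x hxa a Set.self_mem_Iic)
          (h₂.dist_le_mul a Set.self_mem_Ici y hay)
    _ = K * dist x y := by
        simp only [Real.dist_eq, abs_of_nonpos (sub_nonpos.2 hxa),
          abs_of_nonpos (sub_nonpos.2 hay), abs_of_nonpos (sub_nonpos.2 hxy)]
        ring

noncomputable def gaussWeight (a : ℝ) : ℝ := exp (-a ^ 2 / 2)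

noncomputable def gaussLower (x : ℝ) : ℝ := ∫ a in Set.Iio x, gaussWeight a

noncomputable def gaussUpper (x : ℝ) : ℝ := ∫ a in Set.Ioi x, gaussWeight a

lemma gaussWeight_pos (a : ℝ) : 0 < gaussWeight a := exp_pos _

lemma gaussWeight_neg (a : ℝ) : gaussWeight (-a) = gaussWeight a := by
  simp [gaussWeight]

lemma gaussWeight_eq_exp_neg_mul_sq : gaussWeight = fun a => exp (-(1 / 2) * a ^ 2) := by
  ext a; rw [gaussWeight]; ring_nf

lemma exp_mul_gaussWeight (x : ℝ) : exp (x ^ 2 / 2) * gaussWeight x = 1 := by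
  rw [gaussWeight, ← exp_add, ← exp_zero]; ring_nf

lemma continuous_gaussWeight : Continuous gaussWeight := by
  unfold gaussWeight; fun_prop

lemma integrable_gaussWeight : Integrable gaussWeight := by
  rw [gaussWeight_eq_exp_neg_mul_sq]; exact integrable_exp_neg_mul_sq (by norm_num)

lemma integrable_mul_gaussWeight : Integrable fun a => a * gaussWeight a := by
  rw [gaussWeight_eq_exp_neg_mul_sq]; exact integrable_mul_exp_neg_mul_sq (by norm_num)

lemma integral_gaussWeight : ∫ a, gaussWeight a = √(2 * π) := by
  rw [gaussWeight_eq_exp_neg_mul_sq, integral_gaussian]; congr 1; field_simp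

lemma hasDerivAt_gaussWeight (a : ℝ) : HasDerivAt gaussWeight (-a * gaussWeight a) a := by
  have := ((hasDerivAt_pow 2 a).neg.div_const 2).exp
  convert this using 1
  · ext; simp [gaussWeight]
  · simp [gaussWeight]; ring

lemma tendsto_gaussWeight_atTop : Tendsto gaussWeight atTop (𝓝 0) := by
  have h : Tendsto (fun a : ℝ => -a ^ 2 / 2) atTop atBot :=
    (tendsto_neg_atTop_atBot.comp ((tendsto_pow_atTop two_ne_zero).atTop_div_const two_pos)).congr
      fun a => (neg_div _ _).symm
  exact tendsto_exp_atBot.comp h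

lemma integral_Ioi_mul_gaussWeight (x : ℝ) :
    ∫ a in Set.Ioi x, a * gaussWeight a = gaussWeight x := by
  have := integral_Ioi_of_hasDerivAt_of_tendsto' (a := x) (f' := fun a => a * gaussWeight a)
    (fun a _ => (hasDerivAt_gaussWeight a).neg.congr_deriv (by ring))
    integrable_mul_gaussWeight.integrableOn tendsto_gaussWeight_atTop.neg
  simpa using this

lemma gaussLower_nonneg (x : ℝ) : 0 ≤ gaussLower x :=
  setIntegral_nonneg measurableSet_Iio fun a _ => (gaussWeight_pos a).le

lemma gaussUpper_nonneg (x : ℝ) : 0 ≤ gaussUpper x :=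
  setIntegral_nonneg measurableSet_Ioi fun a _ => (gaussWeight_pos a).le

lemma setIntegral_Iic_gaussWeight (x : ℝ) : ∫ a in Set.Iic x, gaussWeight a = gaussLower x :=
  setIntegral_congr_set Iio_ae_eq_Iic.symm

lemma gaussLower_add_gaussUpper (x : ℝ) : gaussLower x + gaussUpper x = √(2 * π) := by
  rw [← integral_gaussWeight, ← integral_add_compl measurableSet_Iic integrable_gaussWeight,
    Set.compl_Iic, setIntegral_Iic_gaussWeight, gaussUpper]

lemma gaussUpper_neg (x : ℝ) : gaussUpper (-x) = gaussLower x := by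
  have h := integral_comp_neg_Ioi (-x) gaussWeight
  simp only [gaussWeight_neg, neg_neg] at h
  rw [gaussUpper, h, setIntegral_Iic_gaussWeight]

lemma gaussLower_neg (x : ℝ) : gaussLower (-x) = gaussUpper x := by
  rw [← gaussUpper_neg, neg_neg]

lemma gaussLower_le (x : ℝ) : gaussLower x ≤ √(2 * π) := by
  linarith [gaussLower_add_gaussUpper x, gaussUpper_nonneg x]

lemma gaussUpper_le (x : ℝ) : gaussUpper x ≤ √(2 * π) := by
  linarith [gaussLower_add_gaussUpper x, gaussLower_nonneg x]

lemma monotone_gaussLower : Monotone gaussLower := fun _ _ h =>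
  setIntegral_mono_set integrable_gaussWeight.integrableOn
    (.of_forall fun a => (gaussWeight_pos a).le) (Set.Iio_subset_Iio h).eventuallyLE

lemma antitone_gaussUpper : Antitone gaussUpper := fun x y h => by
  linarith [gaussLower_add_gaussUpper x, gaussLower_add_gaussUpper y, monotone_gaussLower h]

lemma hasDerivAt_gaussLower (x : ℝ) : HasDerivAt gaussLower (gaussWeight x) x := by
  have h := (continuous_gaussWeight.integral_hasStrictDerivAt 0 x).hasDerivAt.const_add
    (gaussLower 0)
  refine h.congr_of_eventuallyEq (.of_forall fun y => ?_)
  show gaussLower y = gaussLower 0 + ∫ a in (0 : ℝ)..y, gaussWeight a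
  rw [← setIntegral_Iic_gaussWeight, ← setIntegral_Iic_gaussWeight,
    ← intervalIntegral.integral_Iic_sub_Iic integrable_gaussWeight.integrableOn
      integrable_gaussWeight.integrableOn]
  ring

lemma mul_gaussUpper_le (x : ℝ) : x * gaussUpper x ≤ gaussWeight x := by
  calc x * gaussUpper x = ∫ a in Set.Ioi x, x * gaussWeight a := (integral_const_mul _ _).symm
    _ ≤ ∫ a in Set.Ioi x, a * gaussWeight a :=
        setIntegral_mono_on (integrable_gaussWeight.const_mul x).integrableOn
          integrable_mul_gaussWeight.integrableOn measurableSet_Ioi fun a ha =>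
            mul_le_mul_of_nonneg_right (le_of_lt ha) (gaussWeight_pos a).le
    _ = gaussWeight x := integral_Ioi_mul_gaussWeight x

lemma stdNormalCDF_eq (z : ℝ) : stdNormalCDF z = gaussLower z / √(2 * π) := by
  have hpdf : gaussianPDFReal 0 1 = fun a => (√(2 * π))⁻¹ * gaussWeight a := by
    ext a; simp [gaussianPDFReal, gaussWeight]
  rw [stdNormalCDF, gaussianReal_apply_eq_integral 0 one_ne_zero, hpdf, integral_const_mul,
    setIntegral_Iic_gaussWeight, ENNReal.toReal_ofReal (by positivity [gaussLower_nonneg z]),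
    inv_mul_eq_div]

lemma setIntegral_Iio_indicator_Iic_gaussWeight (x z : ℝ) :
    ∫ a in Set.Iio x, (Set.Iic z).indicator gaussWeight a = gaussLower (min x z) := by
  rw [setIntegral_indicator measurableSet_Iic, gaussLower, ← Set.Iio_inter_Iio]
  exact setIntegral_congr_set ((ae_eq_refl _).inter Iio_ae_eq_Iic.symm)

lemma steinSolution_eq (z x : ℝ) : steinSolution z x =
    exp (x ^ 2 / 2) * gaussLower (min x z) * gaussUpper (max x z) / √(2 * π) := by
  have hintegrand : ∀ a, (Set.indicator (Set.Iic z) (fun _ => (1 : ℝ)) a - stdNormalCDF z) *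
      exp (-a ^ 2 / 2) = (Set.Iic z).indicator gaussWeight a - stdNormalCDF z * gaussWeight a := by
    intro a
    by_cases ha : a ∈ Set.Iic z <;> simp [ha, gaussWeight, sub_mul]
  have hintegral : ∫ a in Set.Iio x,
      (Set.Iic z).indicator gaussWeight a - stdNormalCDF z * gaussWeight a =
        gaussLower (min x z) - gaussLower z / √(2 * π) * gaussLower x := by
    rw [integral_sub ((integrable_gaussWeight.indicator measurableSet_Iic).integrableOn)
      (integrable_gaussWeight.const_mul _).integrableOn, integral_const_mul,
      setIntegral_Iio_indicator_Iic_gaussWeight, stdNormalCDF_eq]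
    rfl
  rw [steinSolution, funext hintegrand, hintegral, mul_div_assoc, mul_assoc]
  congr 1
  field_simp
  rcases le_total x z with h | h
  · rw [min_eq_left h, max_eq_right h, ← gaussLower_add_gaussUpper z]; ring
  · rw [min_eq_right h, max_eq_left h, ← gaussLower_add_gaussUpper x]; ring

lemma steinSolution_neg (z x : ℝ) : steinSolution z (-x) = steinSolution (-z) x := by
  rw [steinSolution_eq, steinSolution_eq, neg_sq,
    show min (-x) z = -max x (-z) by rw [← min_neg_neg, neg_neg],
    show max (-x) z = -min x (-z) by rw [← max_neg_neg, neg_neg],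
    gaussLower_neg, gaussUpper_neg]
  ring

lemma abs_mul_steinSolution_le (z x : ℝ) : |x * steinSolution z x| ≤ 1 := by
  wlog hx : 0 ≤ x generalizing z x
  · simpa [steinSolution_neg] using this (-z) (-x) (by linarith)
  have hL : gaussLower (min x z) / √(2 * π) ≤ 1 :=
    div_le_one_of_le₀ (gaussLower_le _) (by positivity)
  have hU : gaussUpper (max x z) ≤ gaussUpper x := antitone_gaussUpper (le_max_left x z)
  have hL₀ := gaussLower_nonneg (min x z)
  have hU₀ := gaussUpper_nonneg (max x z)
  rw [abs_of_nonneg (by rw [steinSolution_eq]; positivity)]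
  calc x * steinSolution z x
      = gaussLower (min x z) / √(2 * π) * (exp (x ^ 2 / 2) * (x * gaussUpper (max x z))) := by
        rw [steinSolution_eq]; ring
    _ ≤ 1 * (exp (x ^ 2 / 2) * (x * gaussUpper x)) := by
        gcongr
    _ ≤ exp (x ^ 2 / 2) * gaussWeight x := by
        rw [one_mul]; gcongr; exact mul_gaussUpper_le x
    _ = 1 := exp_mul_gaussWeight x

lemma steinSolution_of_le {z x : ℝ} (hx : x ≤ z) :
    steinSolution z x = gaussUpper z / √(2 * π) * (exp (x ^ 2 / 2) * gaussLower x) := by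
  rw [steinSolution_eq, min_eq_left hx, max_eq_right hx]; ring

lemma hasDerivAt_exp_mul_gaussLower (x : ℝ) :
    HasDerivAt (fun y => exp (y ^ 2 / 2) * gaussLower y)
      (x * (exp (x ^ 2 / 2) * gaussLower x) + 1) x := by
  have hexp : HasDerivAt (fun y => exp (y ^ 2 / 2)) (exp (x ^ 2 / 2) * x) x := by
    simpa using ((hasDerivAt_pow 2 x).div_const 2).exp
  refine (hexp.mul (hasDerivAt_gaussLower x)).congr_deriv ?_
  rw [← exp_mul_gaussWeight x]; ring

lemma hasDerivWithinAt_steinSolution_Iic {z x : ℝ} (hx : x ≤ z) :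
    HasDerivWithinAt (steinSolution z) (x * steinSolution z x + gaussUpper z / √(2 * π))
      (Set.Iic z) x := by
  have h := ((hasDerivAt_exp_mul_gaussLower x).const_mul
    (gaussUpper z / √(2 * π))).hasDerivWithinAt (s := Set.Iic z)
  refine (h.congr (fun y hy => steinSolution_of_le hy) (steinSolution_of_le hx)).congr_deriv ?_
  rw [steinSolution_of_le hx]; ring

lemma lipschitzOnWith_steinSolution_Iic (z : ℝ) :
    LipschitzOnWith 2 (steinSolution z) (Set.Iic z) := by
  refine (convex_Iic z).lipschitzOnWith_of_nnnorm_hasDerivWithin_le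
    (fun x hx => hasDerivWithinAt_steinSolution_Iic hx) fun x _ => ?_
  have hU : |gaussUpper z / √(2 * π)| ≤ 1 := by
    rw [abs_of_nonneg (by have := gaussUpper_nonneg z; positivity)]
    exact div_le_one_of_le₀ (gaussUpper_le z) (by positivity)
  rw [← NNReal.coe_le_coe, coe_nnnorm, Real.norm_eq_abs]
  calc |x * steinSolution z x + gaussUpper z / √(2 * π)|
      ≤ |x * steinSolution z x| + |gaussUpper z / √(2 * π)| := abs_add_le _ _
    _ ≤ 1 + 1 := add_le_add (abs_mul_steinSolution_le z x) hU
    _ = 2 := by norm_num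

lemma lipschitzOnWith_steinSolution_Ici (z : ℝ) :
    LipschitzOnWith 2 (steinSolution z) (Set.Ici z) := by
  have h := (lipschitzOnWith_steinSolution_Iic (-z)).comp LipschitzWith.id.neg.lipschitzOnWith
    (s := Set.Ici z) fun x hx => by simpa using hx
  rw [mul_one] at h
  convert h using 1
  ext x
  simp [steinSolution_neg]

lemma lipschitzWith_steinSolution (z : ℝ) : LipschitzWith 2 (steinSolution z) :=
  (lipschitzOnWith_steinSolution_Iic z).lipschitzWith_of_Iic_Ici
    (lipschitzOnWith_steinSolution_Ici z)

theorem steinSolution_lipschitz (z : ℝ) :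
    ∀ x y : ℝ, |steinSolution z x - steinSolution z y| ≤ 2 * |x - y| := by
  intro x y
  simpa [Real.dist_eq] using (lipschitzWith_steinSolution z).dist_le_mul x y
end

section
/- A real random variable Z (with all relevant expectations finite) has the N(0,1) distribution if and only if E[Z f(Z) − f'(Z)] = 0 for every continuous, piecewise continuously differentiable function f with E|f'(N)| < ∞, where N ~ N(0,1). -/
/-!
The density `p` of `N(m, v)` satisfies `v p' = -(x - m) p`, so away from the finitely many bad
points the derivative of `-v f p` is `((x - m) f - v f') p`. A function that is integrable together
with its derivative tends to `0` at `±∞`, so this derivative integrates to `0`.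

Conversely, the identity for `f = sin (t ·)` and `f = cos (t ·)` says that the characteristic
function `φ` of `Z`, differentiable because `Z` is integrable, solves `φ' t = -t φ t`, `φ 0 = 1`;
hence `φ t = exp (-t² / 2)`, the characteristic function of `N(0, 1)`.
-/

open MeasureTheory ProbabilityTheory Real Set Filter
open scoped NNReal Topology

theorem integral_eq_zero_of_hasDerivAt_off_finite_of_integrable
    {E : Type*} [NormedAddCommGroup E] [NormedSpace ℝ E] [CompleteSpace E]
    {f f' : ℝ → E} {s : Set ℝ} (hs : s.Finite) (hf : Continuous f)
    (hderiv : ∀ x ∉ s, HasDerivAt f (f' x) x) (hf' : Integrable f') (hfi : Integrable f) :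
    ∫ x, f' x = 0 := by
  obtain ⟨A, hA⟩ := hs.bddAbove
  obtain ⟨B, hB⟩ := hs.bddBelow
  have htop : Tendsto f atTop (𝓝 0) :=
    tendsto_zero_of_hasDerivAt_of_integrableOn_Ioi (a := A)
      (fun x hx => hderiv x fun h => (hA h).not_gt hx) hf'.integrableOn hfi.integrableOn
  have hbot : Tendsto f atBot (𝓝 0) :=
    tendsto_zero_of_hasDerivAt_of_integrableOn_Iic (a := B - 1)
      (fun x hx => hderiv x fun h => by linarith [hB h, mem_Iic.1 hx]) hf'.integrableOn
      hfi.integrableOn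
  have hftc (r : ℝ) : ∫ x in -r..r, f' x = f r - f (-r) :=
    integral_eq_of_hasDerivAt_off_countable f f' hs.countable hf.continuousOn
      (fun x hx => hderiv x hx.2) hf'.intervalIntegrable
  refine tendsto_nhds_unique (intervalIntegral_tendsto_integral hf' tendsto_neg_atTop_atBot
    tendsto_id) ?_
  simpa [hftc] using htop.sub (hbot.comp tendsto_neg_atTop_atBot)

theorem Continuous.integrable_of_integrable_sub_smul
    {E : Type*} [NormedAddCommGroup E] [NormedSpace ℝ E]
    {μ : Measure ℝ} [IsLocallyFiniteMeasure μ] {f : ℝ → E} (hf : Continuous f) (c : ℝ)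
    (h : Integrable (fun x => (x - c) • f x) μ) : Integrable f μ := by
  rw [← integrableOn_univ, ← union_compl_self (Icc (c - 1) (c + 1))]
  refine hf.continuousOn.integrableOn_Icc.union
    (Integrable.mono' h.norm.integrableOn hf.aestronglyMeasurable.restrict ?_)
  refine (ae_restrict_mem measurableSet_Icc.compl).mono fun x hx => ?_
  have : 1 ≤ |x - c| := by
    rw [mem_compl_iff, mem_Icc, not_and_or, not_le, not_le] at hx
    rcases hx with hx | hx
    · rw [abs_of_neg (by linarith)]; linarith
    · rw [abs_of_pos (by linarith)]; linarith
  rw [norm_smul, Real.norm_eq_abs]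
  exact le_mul_of_one_le_left (norm_nonneg _) this

theorem integrable_gaussianReal_iff {E : Type*} [NormedAddCommGroup E] [NormedSpace ℝ E]
    {m : ℝ} {v : ℝ≥0} (hv : v ≠ 0) {f : ℝ → E} :
    Integrable f (gaussianReal m v) ↔ Integrable (fun x => gaussianPDFReal m v x • f x) := by
  simp only [gaussianReal_of_var_ne_zero m hv, gaussianPDF,
    integrable_withDensity_iff_integrable_smul' (measurable_gaussianPDF m v)
      (ae_of_all _ fun _ => ENNReal.ofReal_lt_top),
    ENNReal.toReal_ofReal (gaussianPDFReal_nonneg m v _)]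

theorem hasDerivAt_gaussianPDFReal (m : ℝ) (v : ℝ≥0) (x : ℝ) :
    HasDerivAt (gaussianPDFReal m v) (-((x - m) / v) * gaussianPDFReal m v x) x := by
  have h : HasDerivAt (fun y => -(y - m) ^ 2 / (2 * v)) (-((x - m) / v)) x :=
    ((((hasDerivAt_id x).sub_const m).pow 2).neg.div_const (2 * (v : ℝ))).congr_deriv
      (by simp; ring)
  exact (h.exp.const_mul (√(2 * π * v))⁻¹).congr_deriv (by simp only [gaussianPDFReal]; ring)

theorem integral_sub_mul_gaussianReal {m : ℝ} {v : ℝ≥0} (hv : v ≠ 0) {f : ℝ → ℝ} {s : Set ℝ}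
    (hs : s.Finite) (hf : Continuous f) (hd : ∀ x ∉ s, DifferentiableAt ℝ f x)
    (hxf : Integrable (fun x => (x - m) * f x) (gaussianReal m v))
    (hf' : Integrable (deriv f) (gaussianReal m v)) :
    ∫ x, (x - m) * f x ∂gaussianReal m v = v * ∫ x, deriv f x ∂gaussianReal m v := by
  rw [integrable_gaussianReal_iff hv] at hxf hf'
  simp only [integral_gaussianReal_eq_integral_smul hv, smul_eq_mul] at hxf hf' ⊢
  rw [← integral_const_mul, ← sub_eq_zero, ← integral_sub hxf (hf'.const_mul _)]
  have hp : Continuous (gaussianPDFReal m v) :=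
    continuous_iff_continuousAt.2 fun x => (hasDerivAt_gaussianPDFReal m v x).continuousAt
  refine integral_eq_zero_of_hasDerivAt_off_finite_of_integrable
    (f := fun x => -(v * (gaussianPDFReal m v x * f x))) hs (by fun_prop) (fun x hx => ?_)
    (hxf.sub (hf'.const_mul _)) ?_
  · exact (((hasDerivAt_gaussianPDFReal m v x).mul (hd x hx).hasDerivAt).const_mul
      (v : ℝ)).neg.congr_deriv (by field_simp; ring)
  · refine (show Continuous _ by fun_prop).integrable_of_integrable_sub_smul m ?_
    exact (hxf.const_mul (-v)).congr (ae_of_all _ fun x => by simp only [smul_eq_mul]; ring)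

theorem hasDerivAt_charFun {ν : Measure ℝ} [IsFiniteMeasure ν] (hν : Integrable id ν) (t : ℝ) :
    HasDerivAt (charFun ν) (Complex.I * ∫ x, x * Complex.exp (t * x * Complex.I) ∂ν) t := by
  have hL : MemLp id (1 : ℕ) ν := by simpa using memLp_one_iff_integrable.2 hν
  have hd := ((contDiff_charFun hL).differentiable (by simp) t).hasDerivAt
  rw [← iteratedDeriv_one, iteratedDeriv_charFun hL] at hd
  simpa only [pow_one] using hd

theorem integral_mul_cexp_mul_I {ν : Measure ℝ} {g : ℝ → ℝ} (hg : Integrable g ν) (t : ℝ) :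
    ∫ x, g x * Complex.exp (t * x * Complex.I) ∂ν =
      ∫ x, g x * cos (t * x) ∂ν + (∫ x, g x * sin (t * x) ∂ν) * Complex.I := by
  have hcos : Integrable (fun x => g x * cos (t * x)) ν :=
    hg.mul_bdd (by fun_prop) (ae_of_all _ fun x => (norm_eq_abs _).trans_le (abs_cos_le_one _))
  have hsin : Integrable (fun x => g x * sin (t * x)) ν :=
    hg.mul_bdd (by fun_prop) (ae_of_all _ fun x => (norm_eq_abs _).trans_le (abs_sin_le_one _))
  rw [← integral_complex_ofReal, ← integral_complex_ofReal, ← integral_mul_const,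
    ← integral_add hcos.ofReal (hsin.ofReal.mul_const _)]
  congr 1 with x
  rw [← Complex.ofReal_mul, Complex.exp_mul_I]
  push_cast
  ring

theorem eq_cexp_of_hasDerivAt_neg_mul {φ : ℝ → ℂ} (hφ : ∀ t, HasDerivAt φ (-t * φ t) t)
    (h0 : φ 0 = 1) (t : ℝ) : φ t = Complex.exp (-t ^ 2 / 2) := by
  have hg (s : ℝ) : HasDerivAt (fun s => φ s * Complex.exp (s ^ 2 / 2)) 0 s := by
    have he : HasDerivAt (fun s : ℝ => Complex.exp (s ^ 2 / 2)) (s * Complex.exp (s ^ 2 / 2)) s :=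
      ((hasDerivAt_pow 2 (s : ℂ)).div_const 2).cexp.comp_ofReal.congr_deriv (by push_cast; ring)
    exact ((hφ s).mul he).congr_deriv (by ring)
  have hconst := is_const_of_deriv_eq_zero (fun s => (hg s).differentiableAt)
    (fun s => (hg s).deriv) t 0
  simp only [h0, Complex.ofReal_zero, one_mul] at hconst
  calc φ t = φ t * Complex.exp (t ^ 2 / 2) * Complex.exp (-t ^ 2 / 2) := by
        rw [mul_assoc, ← Complex.exp_add]; ring_nf; simp
    _ = Complex.exp (-t ^ 2 / 2) := by simp [hconst]

theorem eq_gaussianReal_of_integral_mul_sin_cos {ν : Measure ℝ} [IsProbabilityMeasure ν]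
    (hν : Integrable id ν)
    (hsin : ∀ t, ∫ x, x * sin (t * x) ∂ν = ∫ x, t * cos (t * x) ∂ν)
    (hcos : ∀ t, ∫ x, x * cos (t * x) ∂ν = ∫ x, -(t * sin (t * x)) ∂ν) :
    ν = gaussianReal 0 1 := by
  have hφ (t : ℝ) : charFun ν t = ∫ x, cos (t * x) ∂ν + (∫ x, sin (t * x) ∂ν) * Complex.I := by
    simpa [charFun_apply_real] using integral_mul_cexp_mul_I (integrable_const (1 : ℝ)) t (ν := ν)
  have hderiv (t : ℝ) : HasDerivAt (charFun ν) (-t * charFun ν t) t := by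
    convert hasDerivAt_charFun hν t using 1
    rw [integral_mul_cexp_mul_I (g := fun x => x) hν t, hφ]
    simp only [hsin, hcos, integral_const_mul, integral_neg]
    push_cast
    ring_nf
    simp only [Complex.I_sq]
    ring
  refine Measure.ext_of_charFun (funext fun t => ?_)
  rw [eq_cexp_of_hasDerivAt_neg_mul hderiv (by simp) t, charFun_gaussianReal]
  push_cast
  ring_nf

theorem integral_map_mul_eq_of_stein {Ω : Type*} [MeasurableSpace Ω] {μ : Measure Ω}
    [IsFiniteMeasure μ] {Z : Ω → ℝ} (hZ : Measurable Z) (hZint : Integrable Z μ)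
    {ν : Measure ℝ} [IsFiniteMeasure ν] {f f' : ℝ → ℝ} {B C : ℝ}
    (hf : ∀ x, HasDerivAt f (f' x) x) (hf'c : Continuous f')
    (hfb : ∀ x, |f x| ≤ B) (hf'b : ∀ x, |f' x| ≤ C)
    (hstein : Continuous f →
      (∃ S : Finset ℝ, (∀ x ∉ S, DifferentiableAt ℝ f x) ∧
        ContinuousOn (deriv f) (↑S : Set ℝ)ᶜ) →
      Integrable (fun x => deriv f x) ν →
      Integrable (fun ω => Z ω * f (Z ω)) μ →
      Integrable (fun ω => deriv f (Z ω)) μ →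
      ∫ ω, (Z ω * f (Z ω) - deriv f (Z ω)) ∂μ = 0) :
    ∫ x, x * f x ∂μ.map Z = ∫ x, f' x ∂μ.map Z := by
  have hderiv : deriv f = f' := funext fun x => (hf x).deriv
  have hfc : Continuous f := continuous_iff_continuousAt.2 fun x => (hf x).continuousAt
  have hZf : Integrable (fun ω => Z ω * f (Z ω)) μ :=
    hZint.mul_bdd (by fun_prop) (ae_of_all _ fun ω => hfb (Z ω))
  have hZf' : Integrable (fun ω => f' (Z ω)) μ :=
    .of_bound (by fun_prop) C (ae_of_all _ fun ω => hf'b (Z ω))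
  have h := hstein hfc ⟨∅, fun x _ => (hf x).differentiableAt, hderiv ▸ hf'c.continuousOn⟩
    (hderiv ▸ .of_bound hf'c.aestronglyMeasurable C (ae_of_all _ hf'b)) hZf (hderiv ▸ hZf')
  rw [hderiv, integral_sub hZf hZf', sub_eq_zero] at h
  rwa [integral_map hZ.aemeasurable (by fun_prop),
    integral_map hZ.aemeasurable hf'c.aestronglyMeasurable]

/-- Stein's lemma: a real random variable `Z` with enough integrability is standard
Gaussian if and only if `E[Z f(Z) - f'(Z)] = 0` for every continuous, piecewise
continuously differentiable `f` with `E|f'(N)| < ∞`. -/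
theorem steins_lemma
    {Ω : Type*} [MeasurableSpace Ω] (μ : Measure Ω) [IsProbabilityMeasure μ]
    (Z : Ω → ℝ) (hZ : Measurable Z) (hZint : Integrable Z μ) :
    Measure.map Z μ = gaussianReal 0 1 ↔
      ∀ f : ℝ → ℝ, Continuous f →
        (∃ S : Finset ℝ, (∀ x ∉ S, DifferentiableAt ℝ f x) ∧
          ContinuousOn (deriv f) (↑S : Set ℝ)ᶜ) →
        Integrable (fun x => deriv f x) (gaussianReal 0 1) →
        Integrable (fun ω => Z ω * f (Z ω)) μ →
        Integrable (fun ω => deriv f (Z ω)) μ →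
        ∫ ω, (Z ω * f (Z ω) - deriv f (Z ω)) ∂μ = 0 := by
  constructor
  · rintro hlaw f hf ⟨S, hdiff, -⟩ hf' hZf hZf'
    have hxf : Integrable (fun x => (x - 0) * f x) (gaussianReal 0 1) := by
      rw [← hlaw, integrable_map_measure (by fun_prop) hZ.aemeasurable]
      simpa [Function.comp_def] using hZf
    have hibp := integral_sub_mul_gaussianReal one_ne_zero S.finite_toSet hf hdiff hxf hf'
    rw [integral_sub hZf hZf', ← integral_map (f := fun x => x * f x) hZ.aemeasurable
      (by fun_prop), ← integral_map (f := deriv f) hZ.aemeasurable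
      (measurable_deriv f).aestronglyMeasurable, hlaw]
    simpa [sub_eq_zero] using hibp
  · intro hstein
    have : IsProbabilityMeasure (μ.map Z) := Measure.isProbabilityMeasure_map hZ.aemeasurable
    have hbound (g : ℝ → ℝ) (hg : ∀ x, |g x| ≤ 1) (t x : ℝ) : |t * g x| ≤ |t| := by
      rw [abs_mul]; exact mul_le_of_le_one_right (abs_nonneg t) (hg x)
    refine eq_gaussianReal_of_integral_mul_sin_cos
      ((integrable_map_measure aestronglyMeasurable_id hZ.aemeasurable).2 hZint)
      (fun t => integral_map_mul_eq_of_stein hZ hZint (fun x => ?_) (by fun_prop)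
        (fun x => abs_sin_le_one _) (hbound _ (fun x => abs_cos_le_one _) t) (hstein _))
      (fun t => integral_map_mul_eq_of_stein hZ hZint (fun x => ?_) (by fun_prop)
        (fun x => abs_cos_le_one _)
        (fun x => (abs_neg _).trans_le (hbound _ (fun x => abs_sin_le_one _) t x)) (hstein _))
    · exact ((hasDerivAt_id x).const_mul t).sin.congr_deriv (by simp [mul_comm])
    · exact ((hasDerivAt_id x).const_mul t).cos.congr_deriv (by simp [mul_comm])
end

section
/- Let Z, N be real random variables and for t ∈ [0,1] define Ψ(t) = E[φ(√(1−t) Z + √t N)] for a function φ : ℝ → ℝ of class C² with bounded second derivative, where Z and N are independent and square-integrable. Then Ψ is differentiable on (0,1) with Ψ'(t) = E[φ'(√(1−t)Z + √t N)(N/(2√t) − Z/(2√(1−t)))], and |E[φ(Z)] − E[φ(N)]| ≤ ∫_0^1 |Ψ'(t)| dt. -/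
/-!
The path `X s = √(1 - s) Z + √s N` runs from `Z` to `N`, so `E φ(Z) - E φ(N) = Ψ 0 - Ψ 1`, and the
bound is the fundamental theorem of calculus once `Ψ` is continuous on `[0, 1]` with integrable
derivative on `(0, 1)`. A bounded `φ''` makes `φ'` grow at most linearly and `φ` at most
quadratically, so with `S = |Z| + |N|` (square integrable) one has `|φ (X s)| ≲ 1 + S + S²` and
`|φ' (X s) ∂ₛ X s| ≲ (1 + S) S (1 / √s + 1 / √(1 - s))`. These dominations justify continuity and
differentiation under the expectation, and the weight `1 / √s + 1 / √(1 - s)` is integrable on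
`(0, 1)`.
-/

open MeasureTheory ProbabilityTheory Real Set Filter Topology

lemma abs_le_of_abs_deriv_le_affine {f : ℝ → ℝ} (hf : Differentiable ℝ f) {a b : ℝ}
    (hb : 0 ≤ b) (h : ∀ x, |deriv f x| ≤ a + b * |x|) (x : ℝ) :
    |f x| ≤ |f 0| + (a + b * |x|) * |x| := by
  have hmvt := (convex_Icc (-|x|) |x|).norm_image_sub_le_of_norm_deriv_le (f := f)
    (C := a + b * |x|) (fun y _ => hf y)
    (fun y hy => (h y).trans (add_le_add_right (mul_le_mul_of_nonneg_left (abs_le.2 hy) hb) a))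
    (x := 0) (y := x) (abs_le.1 (by simp)) (abs_le.1 le_rfl)
  simp only [Real.norm_eq_abs, sub_zero] at hmvt
  linarith [abs_sub_abs_le_abs_sub (f x) (f 0)]

section SecondDerivativeBound

variable {φ : ℝ → ℝ} {C : ℝ}

lemma abs_deriv_le_of_abs_deriv_deriv_le (hφ : ContDiff ℝ 2 φ)
    (hC : ∀ x, |deriv (deriv φ) x| ≤ C) (x : ℝ) :
    |deriv φ x| ≤ |deriv φ 0| + C * |x| := by
  have hφ' : Differentiable ℝ (deriv φ) :=
    (hφ.iterate_deriv' 1 1).differentiable one_ne_zero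
  simpa using abs_le_of_abs_deriv_le_affine hφ' le_rfl (a := C) (by simpa using hC) x

lemma abs_le_of_abs_deriv_deriv_le (hφ : ContDiff ℝ 2 φ)
    (hC : ∀ x, |deriv (deriv φ) x| ≤ C) (x : ℝ) :
    |φ x| ≤ |φ 0| + (|deriv φ 0| + C * |x|) * |x| :=
  abs_le_of_abs_deriv_le_affine (hφ.differentiable two_ne_zero) ((abs_nonneg _).trans (hC 0))
    (abs_deriv_le_of_abs_deriv_deriv_le hφ hC) x

end SecondDerivativeBound

lemma abs_sqrt_one_sub_mul_add_sqrt_mul_le {s : ℝ} (hs : s ∈ Icc (0 : ℝ) 1) (z n : ℝ) :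
    |√(1 - s) * z + √s * n| ≤ |z| + |n| := by
  have h₁ : √(1 - s) ≤ 1 := sqrt_le_one.2 (by linarith [hs.1])
  have h₂ : √s ≤ 1 := sqrt_le_one.2 hs.2
  calc |√(1 - s) * z + √s * n| ≤ √(1 - s) * |z| + √s * |n| := by
        have h := abs_add_le (√(1 - s) * z) (√s * n)
        rwa [abs_mul, abs_mul, abs_of_nonneg (sqrt_nonneg _), abs_of_nonneg (sqrt_nonneg _)] at h
    _ ≤ |z| + |n| :=
        add_le_add (mul_le_of_le_one_left (abs_nonneg z) h₁)
          (mul_le_of_le_one_left (abs_nonneg n) h₂)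

lemma hasDerivAt_sqrt_one_sub_mul_add_sqrt_mul {s : ℝ} (hs : s ∈ Ioo (0 : ℝ) 1) (z n : ℝ) :
    HasDerivAt (fun u => √(1 - u) * z + √u * n) (n / (2 * √s) - z / (2 * √(1 - s))) s := by
  have h₁ := ((hasDerivAt_id s).const_sub 1).sqrt (by simp; linarith [hs.2])
  have h₂ := hasDerivAt_sqrt hs.1.ne'
  refine ((h₁.mul_const z).add (h₂.mul_const n)).congr_deriv ?_
  simp only [id]
  ring

noncomputable def pathSpeedBound (s : ℝ) : ℝ := 1 / (2 * √s) + 1 / (2 * √(1 - s))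

lemma abs_div_two_sqrt_sub_div_two_sqrt_one_sub_le (s z n : ℝ) :
    |n / (2 * √s) - z / (2 * √(1 - s))| ≤ (|z| + |n|) * pathSpeedBound s := by
  have h₁ : 0 ≤ 1 / (2 * √s) := by positivity
  have h₂ : 0 ≤ 1 / (2 * √(1 - s)) := by positivity
  calc |n / (2 * √s) - z / (2 * √(1 - s))|
      ≤ |n| / (2 * √s) + |z| / (2 * √(1 - s)) := by
        have h := abs_sub (n / (2 * √s)) (z / (2 * √(1 - s)))
        rwa [abs_div, abs_div, abs_of_nonneg (by positivity : (0 : ℝ) ≤ 2 * √s),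
          abs_of_nonneg (by positivity : (0 : ℝ) ≤ 2 * √(1 - s))] at h
    _ ≤ (|z| + |n|) * pathSpeedBound s := by
        rw [pathSpeedBound, div_eq_mul_one_div |n|, div_eq_mul_one_div |z|]
        nlinarith [mul_nonneg (abs_nonneg z) h₁, mul_nonneg (abs_nonneg n) h₂]

lemma pathSpeedBound_le {a b s : ℝ} (ha : 0 < a) (hb : b < 1) (hs : s ∈ Icc a b) :
    pathSpeedBound s ≤ 1 / (2 * √a) + 1 / (2 * √(1 - b)) := by
  have : 0 < √a := sqrt_pos.2 ha
  have : 0 < √(1 - b) := sqrt_pos.2 (by linarith)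
  unfold pathSpeedBound
  gcongr
  · exact hs.1
  · exact hs.2

lemma integrableOn_pathSpeedBound : IntegrableOn pathSpeedBound (Ioo 0 1) := by
  have h₀ : IntervalIntegrable (fun t : ℝ => t ^ (-(1 / 2) : ℝ)) volume 0 1 :=
    intervalIntegral.intervalIntegrable_rpow' (by norm_num)
  have h₁ : IntervalIntegrable (fun t : ℝ => (1 - t) ^ (-(1 / 2) : ℝ)) volume 0 1 := by
    simpa using (h₀.comp_sub_left 1).symm
  have h := (intervalIntegrable_iff_integrableOn_Ioo_of_le zero_le_one).1
    ((h₀.const_mul (1 / 2)).add (h₁.const_mul (1 / 2)))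
  refine h.congr_fun (fun t ht => ?_) measurableSet_Ioo
  simp [pathSpeedBound, rpow_neg, ht.1.le, sub_nonneg.2 ht.2.le, sqrt_eq_rpow]
  ring

section SmartPath

variable {Ω : Type*} [MeasurableSpace Ω] {μ : Measure Ω} {Z N : Ω → ℝ} {φ : ℝ → ℝ} {C : ℝ}

lemma integrable_affine_mul_of_memLp_two [IsFiniteMeasure μ] {S : Ω → ℝ} (hS : MemLp S 2 μ)
    (a b : ℝ) : Integrable (fun ω => (a + b * S ω) * S ω) μ := by
  refine (((hS.integrable one_le_two).const_mul a).add (hS.integrable_sq.const_mul b)).congr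
    (Eventually.of_forall fun ω => ?_)
  simp only [Pi.add_apply]
  ring

lemma abs_comp_sqrt_one_sub_mul_add_sqrt_mul_le (hφ : ContDiff ℝ 2 φ)
    (hC : ∀ x, |deriv (deriv φ) x| ≤ C) {s : ℝ} (hs : s ∈ Icc (0 : ℝ) 1) (z n : ℝ) :
    |φ (√(1 - s) * z + √s * n)| ≤ |φ 0| + (|deriv φ 0| + C * (|z| + |n|)) * (|z| + |n|) := by
  have hC₀ : 0 ≤ C := (abs_nonneg _).trans (hC 0)
  have hx := abs_sqrt_one_sub_mul_add_sqrt_mul_le hs z n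
  calc _ ≤ _ := abs_le_of_abs_deriv_deriv_le hφ hC _
    _ ≤ _ := by gcongr

lemma abs_deriv_comp_sqrt_one_sub_mul_add_sqrt_mul_mul_le (hφ : ContDiff ℝ 2 φ)
    (hC : ∀ x, |deriv (deriv φ) x| ≤ C) {s : ℝ} (hs : s ∈ Icc (0 : ℝ) 1) (z n : ℝ) :
    |deriv φ (√(1 - s) * z + √s * n) * (n / (2 * √s) - z / (2 * √(1 - s)))|
      ≤ (|deriv φ 0| + C * (|z| + |n|)) * (|z| + |n|) * pathSpeedBound s := by
  have hC₀ : 0 ≤ C := (abs_nonneg _).trans (hC 0)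
  have hx := abs_sqrt_one_sub_mul_add_sqrt_mul_le hs z n
  rw [abs_mul, mul_assoc]
  gcongr
  · exact (abs_deriv_le_of_abs_deriv_deriv_le hφ hC _).trans (by gcongr)
  · exact abs_div_two_sqrt_sub_div_two_sqrt_one_sub_le s z n

lemma aestronglyMeasurable_comp_sqrt_one_sub_mul_add_sqrt_mul {ψ : ℝ → ℝ} (hψ : Continuous ψ)
    (hZ : AEStronglyMeasurable Z μ) (hN : AEStronglyMeasurable N μ) (s : ℝ) :
    AEStronglyMeasurable (fun ω => ψ (√(1 - s) * Z ω + √s * N ω)) μ :=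
  hψ.comp_aestronglyMeasurable ((hZ.const_mul _).add (hN.const_mul _))

variable [IsFiniteMeasure μ]

lemma integrable_affine_mul_abs_add_abs (hZ : MemLp Z 2 μ) (hN : MemLp N 2 μ) (a b : ℝ) :
    Integrable (fun ω => (a + b * (|Z ω| + |N ω|)) * (|Z ω| + |N ω|)) μ :=
  integrable_affine_mul_of_memLp_two (hZ.abs.add hN.abs) a b

lemma integrable_comp_sqrt_one_sub_mul_add_sqrt_mul (hZ : MemLp Z 2 μ) (hN : MemLp N 2 μ)
    (hφ : ContDiff ℝ 2 φ) (hC : ∀ x, |deriv (deriv φ) x| ≤ C) {s : ℝ} (hs : s ∈ Icc (0 : ℝ) 1) :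
    Integrable (fun ω => φ (√(1 - s) * Z ω + √s * N ω)) μ :=
  ((integrable_const _).add (integrable_affine_mul_abs_add_abs hZ hN _ _)).mono'
    (aestronglyMeasurable_comp_sqrt_one_sub_mul_add_sqrt_mul hφ.continuous
      hZ.aestronglyMeasurable hN.aestronglyMeasurable s)
    (Eventually.of_forall fun ω => abs_comp_sqrt_one_sub_mul_add_sqrt_mul_le hφ hC hs (Z ω) (N ω))

lemma continuousOn_integral_comp_sqrt_one_sub_mul_add_sqrt_mul (hZ : MemLp Z 2 μ)
    (hN : MemLp N 2 μ) (hφ : ContDiff ℝ 2 φ) (hC : ∀ x, |deriv (deriv φ) x| ≤ C) :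
    ContinuousOn (fun s => ∫ ω, φ (√(1 - s) * Z ω + √s * N ω) ∂μ) (Icc 0 1) := by
  have hφc := hφ.continuous
  refine continuousOn_of_dominated
    (fun s _ => aestronglyMeasurable_comp_sqrt_one_sub_mul_add_sqrt_mul hφc
      hZ.aestronglyMeasurable hN.aestronglyMeasurable s)
    (fun s hs => Eventually.of_forall fun ω =>
      abs_comp_sqrt_one_sub_mul_add_sqrt_mul_le hφ hC hs (Z ω) (N ω))
    ((integrable_const _).add (integrable_affine_mul_abs_add_abs hZ hN _ _))
    (Eventually.of_forall fun _ => Continuous.continuousOn (by fun_prop))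

lemma hasDerivAt_integral_comp_sqrt_one_sub_mul_add_sqrt_mul (hZ : MemLp Z 2 μ)
    (hN : MemLp N 2 μ) (hφ : ContDiff ℝ 2 φ) (hC : ∀ x, |deriv (deriv φ) x| ≤ C) {t : ℝ}
    (ht : t ∈ Ioo (0 : ℝ) 1) :
    HasDerivAt (fun s => ∫ ω, φ (√(1 - s) * Z ω + √s * N ω) ∂μ)
      (∫ ω, deriv φ (√(1 - t) * Z ω + √t * N ω)
        * (N ω / (2 * √t) - Z ω / (2 * √(1 - t))) ∂μ) t := by
  obtain ⟨ht₀, ht₁⟩ := ht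
  have hC₀ : 0 ≤ C := (abs_nonneg _).trans (hC 0)
  have hnhds : Icc (t / 2) ((1 + t) / 2) ∈ 𝓝 t := Icc_mem_nhds (by linarith) (by linarith)
  have hsub : ∀ s ∈ Icc (t / 2) ((1 + t) / 2), s ∈ Ioo (0 : ℝ) 1 :=
    fun s hs => ⟨by linarith [hs.1], by linarith [hs.2]⟩
  have hF'_meas : AEStronglyMeasurable (fun ω => deriv φ (√(1 - t) * Z ω + √t * N ω)
      * (N ω / (2 * √t) - Z ω / (2 * √(1 - t)))) μ :=
    (aestronglyMeasurable_comp_sqrt_one_sub_mul_add_sqrt_mul (hφ.continuous_deriv one_le_two)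
      hZ.aestronglyMeasurable hN.aestronglyMeasurable t).mul
      ((hN.aestronglyMeasurable.aemeasurable.div_const _).sub
        (hZ.aestronglyMeasurable.aemeasurable.div_const _)).aestronglyMeasurable
  have h_bound : ∀ᵐ ω ∂μ, ∀ s ∈ Icc (t / 2) ((1 + t) / 2),
      ‖deriv φ (√(1 - s) * Z ω + √s * N ω) * (N ω / (2 * √s) - Z ω / (2 * √(1 - s)))‖
        ≤ (|deriv φ 0| + C * (|Z ω| + |N ω|)) * (|Z ω| + |N ω|)
          * (1 / (2 * √(t / 2)) + 1 / (2 * √(1 - (1 + t) / 2))) :=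
    Eventually.of_forall fun ω s hs =>
      (abs_deriv_comp_sqrt_one_sub_mul_add_sqrt_mul_mul_le hφ hC (Ioo_subset_Icc_self (hsub s hs))
        _ _).trans (mul_le_mul_of_nonneg_left (pathSpeedBound_le (by linarith) (by linarith) hs)
          (mul_nonneg (add_nonneg (abs_nonneg _) (mul_nonneg hC₀ (by positivity))) (by positivity)))
  have h_diff : ∀ᵐ ω ∂μ, ∀ s ∈ Icc (t / 2) ((1 + t) / 2),
      HasDerivAt (fun u => φ (√(1 - u) * Z ω + √u * N ω))
        (deriv φ (√(1 - s) * Z ω + √s * N ω) * (N ω / (2 * √s) - Z ω / (2 * √(1 - s)))) s :=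
    Eventually.of_forall fun ω s hs =>
      ((hφ.differentiable two_ne_zero _).hasDerivAt.comp s
        (hasDerivAt_sqrt_one_sub_mul_add_sqrt_mul (hsub s hs) (Z ω) (N ω)))
  exact (hasDerivAt_integral_of_dominated_loc_of_deriv_le hnhds
    (Eventually.of_forall fun s =>
      aestronglyMeasurable_comp_sqrt_one_sub_mul_add_sqrt_mul hφ.continuous
        hZ.aestronglyMeasurable hN.aestronglyMeasurable s)
    (integrable_comp_sqrt_one_sub_mul_add_sqrt_mul hZ hN hφ hC ⟨ht₀.le, ht₁.le⟩) hF'_meas h_bound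
    ((integrable_affine_mul_abs_add_abs hZ hN _ _).mul_const _) h_diff).2

lemma abs_deriv_integral_comp_sqrt_one_sub_mul_add_sqrt_mul_le (hZ : MemLp Z 2 μ)
    (hN : MemLp N 2 μ) (hφ : ContDiff ℝ 2 φ) (hC : ∀ x, |deriv (deriv φ) x| ≤ C) {t : ℝ}
    (ht : t ∈ Ioo (0 : ℝ) 1) :
    |deriv (fun s => ∫ ω, φ (√(1 - s) * Z ω + √s * N ω) ∂μ) t|
      ≤ (∫ ω, (|deriv φ 0| + C * (|Z ω| + |N ω|)) * (|Z ω| + |N ω|) ∂μ) * pathSpeedBound t := by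
  rw [(hasDerivAt_integral_comp_sqrt_one_sub_mul_add_sqrt_mul hZ hN hφ hC ht).deriv,
    ← integral_mul_const, ← Real.norm_eq_abs]
  exact norm_integral_le_of_norm_le ((integrable_affine_mul_abs_add_abs hZ hN _ _).mul_const _)
    (Eventually.of_forall fun ω =>
      abs_deriv_comp_sqrt_one_sub_mul_add_sqrt_mul_mul_le hφ hC (Ioo_subset_Icc_self ht)
        (Z ω) (N ω))

lemma integrableOn_deriv_integral_comp_sqrt_one_sub_mul_add_sqrt_mul (hZ : MemLp Z 2 μ)
    (hN : MemLp N 2 μ) (hφ : ContDiff ℝ 2 φ) (hC : ∀ x, |deriv (deriv φ) x| ≤ C) :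
    IntegrableOn (deriv fun s => ∫ ω, φ (√(1 - s) * Z ω + √s * N ω) ∂μ) (Ioo 0 1) :=
  (integrableOn_pathSpeedBound.const_mul _).mono' (measurable_deriv _).aestronglyMeasurable
    (ae_restrict_of_forall_mem measurableSet_Ioo fun _ ht =>
      abs_deriv_integral_comp_sqrt_one_sub_mul_add_sqrt_mul_le hZ hN hφ hC ht)

end SmartPath

lemma abs_sub_le_integral_abs_deriv {f : ℝ → ℝ} {a b : ℝ} (hab : a ≤ b)
    (hcont : ContinuousOn f (Icc a b)) (hdiff : DifferentiableOn ℝ f (Ioo a b))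
    (hint : IntegrableOn (deriv f) (Ioo a b)) :
    |f b - f a| ≤ ∫ t in Ioo a b, |deriv f t| := by
  rw [← integral_Ioc_eq_integral_Ioo, ← intervalIntegral.integral_of_le hab]
  exact norm_sub_le_integral_of_norm_deriv_le_of_le hab hcont hdiff
    (Eventually.of_forall fun _ _ => le_rfl)
    ((intervalIntegrable_iff_integrableOn_Ioo_of_le hab).2 hint.abs)

theorem smart_path_interpolation_general
    {Ω : Type*} [MeasurableSpace Ω] (μ : Measure Ω) [IsProbabilityMeasure μ]
    (Z N : Ω → ℝ)
    (hZ2 : MemLp Z 2 μ) (hN2 : MemLp N 2 μ)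
    (φ : ℝ → ℝ) (hφ : ContDiff ℝ 2 φ)
    (hφ'' : ∃ C : ℝ, ∀ x : ℝ, |deriv (deriv φ) x| ≤ C) :
    (∀ t ∈ Set.Ioo (0 : ℝ) 1,
      HasDerivAt (fun s : ℝ => ∫ ω, φ (Real.sqrt (1 - s) * Z ω + Real.sqrt s * N ω) ∂μ)
        (∫ ω, deriv φ (Real.sqrt (1 - t) * Z ω + Real.sqrt t * N ω)
            * (N ω / (2 * Real.sqrt t) - Z ω / (2 * Real.sqrt (1 - t))) ∂μ) t) ∧
    |(∫ ω, φ (Z ω) ∂μ) - ∫ ω, φ (N ω) ∂μ|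
      ≤ ∫ t in Set.Ioo (0 : ℝ) 1,
          |deriv (fun s : ℝ => ∫ ω, φ (Real.sqrt (1 - s) * Z ω + Real.sqrt s * N ω) ∂μ) t| := by
  obtain ⟨C, hC⟩ := hφ''
  have hderiv := fun t (ht : t ∈ Ioo (0 : ℝ) 1) =>
    hasDerivAt_integral_comp_sqrt_one_sub_mul_add_sqrt_mul hZ2 hN2 hφ hC ht
  refine ⟨hderiv, ?_⟩
  have h := abs_sub_le_integral_abs_deriv zero_le_one
    (continuousOn_integral_comp_sqrt_one_sub_mul_add_sqrt_mul hZ2 hN2 hφ hC)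
    (fun t ht => (hderiv t ht).differentiableAt.differentiableWithinAt)
    (integrableOn_deriv_integral_comp_sqrt_one_sub_mul_add_sqrt_mul hZ2 hN2 hφ hC)
  simpa [abs_sub_comm] using h

theorem smart_path_interpolation
    {Ω : Type*} [MeasurableSpace Ω] (μ : Measure Ω) [IsProbabilityMeasure μ]
    (Z N : Ω → ℝ) (hZ : Measurable Z) (hN : Measurable N)
    (hindep : IndepFun Z N μ)
    (hZ2 : MemLp Z 2 μ) (hN2 : MemLp N 2 μ)
    (φ : ℝ → ℝ) (hφ : ContDiff ℝ 2 φ)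
    (hφ'' : ∃ C : ℝ, ∀ x : ℝ, |deriv (deriv φ) x| ≤ C) :
    (∀ t ∈ Set.Ioo (0 : ℝ) 1,
      HasDerivAt (fun s : ℝ => ∫ ω, φ (Real.sqrt (1 - s) * Z ω + Real.sqrt s * N ω) ∂μ)
        (∫ ω, deriv φ (Real.sqrt (1 - t) * Z ω + Real.sqrt t * N ω)
            * (N ω / (2 * Real.sqrt t) - Z ω / (2 * Real.sqrt (1 - t))) ∂μ) t) ∧
    |(∫ ω, φ (Z ω) ∂μ) - ∫ ω, φ (N ω) ∂μ|
      ≤ ∫ t in Set.Ioo (0 : ℝ) 1,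
          |deriv (fun s : ℝ => ∫ ω, φ (Real.sqrt (1 - s) * Z ω + Real.sqrt s * N ω) ∂μ) t| :=
  smart_path_interpolation_general μ Z N hZ2 hN2 φ hφ hφ''
end
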